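/- Let G=(V,E) be a connected bipartite graph, t ≥ 2 an integer, x, y, z ∈ V and w, w' ∈ V^t such that w = z^{j-1} x x_{j+1} ⋯ x_t, w' = z^{j-1} y y_{j+1} ⋯ y_t, 1 ≤ j ≤ t−1 and x ≠ y. Then d_{S(G,t)}(w, w') = λ(x,y) + (2^{t-j+1} − 1)·d_G(x,y) − 2(2^{t-j} − 1), where λ(x,y) = min_{P_i ∈ 𝒫(x,y)} { d_{S(G,t-j)}( (x^{(i)})^{t-j}, x_{j+1}⋯x_t ) + d_{S(G,t-j)}( (y^{(i)})^{t-j}, y_{j+1}⋯y_t ) }. -/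

import Mathlib

/-- The generalized Sierpiński graph `S(G,t)` of a base graph `G`: vertices are words of
length `t` over the vertex set (encoded as `Fin t → V`); two words are adjacent iff they are
of the form `w x y^{d-1}` and `w y x^{d-1}` for some edge `{x,y}` of `G`. -/
def SierpinskiGraph {V : Type*} (G : SimpleGraph V) (t : ℕ) : SimpleGraph (Fin t → V) where
  Adj u v := ∃ i : Fin t, G.Adj (u i) (v i) ∧
      (∀ j : Fin t, j < i → u j = v j) ∧
      (∀ j : Fin t, i < j → u j = v i ∧ v j = u i)
  symm := by
    refine ⟨?_⟩
    rintro u v ⟨i, h1, h2, h3⟩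
    exact ⟨i, h1.symm, fun j hj => (h2 j hj).symm, fun j hj => ⟨(h3 j hj).2, (h3 j hj).1⟩⟩
  loopless := by
    refine ⟨?_⟩
    rintro u ⟨i, h1, -, -⟩
    exact G.loopless.irrefl _ h1


/-!
Words with first letter `a` form a copy `a·S(G,n)` of `S(G,n)`, and two copies `a`, `b` with
`ab ∈ E` are joined by the single edge `a b^n — b a^n`. Upper bounds come from explicit walks;
every lower bound comes from a potential that changes by at most one along each edge of the
Sierpiński graph:
* the weighted distance `∑ 2^(n-1-i) d_G(a, u_i)` gives `d(a^n, b^n) = (2^n - 1) d_G(a, b)`;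
* the cost of re-entering the copy `z` through some extreme vertex `z b^n` shows that each copy
  is isometric to `S(G,n)`, so a common prefix can be dropped;
* the right-hand side of the formula, read as a function of the first word, is itself such a
  potential. Along an edge `c a^m — a c^m` outside the copy `y` the distance to `y` changes by
  exactly one because `G` is bipartite, and `λ` changes by the matching amount.
The upper bound leaves the copy `x` towards the second vertex of an optimal geodesic to `y`,
zig-zags through the copies of its vertices, and enters the copy `y` from the penultimate one.
-/

namespace SimpleGraph

variable {α : Type*} {H : SimpleGraph α}

theorem le_add_dist_of_forall_adj {f : α → ℕ} (hf : ∀ u v, H.Adj u v → f u ≤ f v + 1)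
    {u v : α} (huv : H.Reachable u v) : f u ≤ f v + H.dist u v := by
  obtain ⟨p, hp⟩ := huv.exists_walk_length_eq_dist
  rw [← hp]
  clear hp huv
  induction p with
  | nil => simp
  | cons h p ih =>
    have := hf _ _ h
    rw [Walk.length_cons]
    omega

theorem dist_ne_dist_of_adj (hb : H.Colorable 2) {a u v : α} (h : H.Adj u v)
    (hu : H.Reachable a u) : H.dist a u ≠ H.dist a v := by
  obtain ⟨c⟩ := hb
  let c' : H.Coloring Bool := recolorOfEquiv H finTwoEquiv c
  obtain ⟨p, hp⟩ := hu.exists_walk_length_eq_dist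
  obtain ⟨q, hq⟩ := (hu.trans h.reachable).exists_walk_length_eq_dist
  intro heq
  have hpq := c'.even_length_iff_congr p
  rw [hp, heq, ← hq, c'.even_length_iff_congr q] at hpq
  have := c'.valid h
  cases ha : c' a <;> cases hu : c' u <;> cases hv : c' v <;> simp_all

end SimpleGraph

namespace SierpinskiGraph

open SimpleGraph

variable {V : Type*} {G : SimpleGraph V} {n m : ℕ}

local notation "dS[" k "]" => SimpleGraph.dist (SierpinskiGraph G k)

theorem adj_cons_iff {a b : V} {T T' : Fin n → V} :
    (SierpinskiGraph G (n + 1)).Adj (Fin.cons a T) (Fin.cons b T') ↔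
      (a = b ∧ (SierpinskiGraph G n).Adj T T') ∨
        (G.Adj a b ∧ T = (fun _ => b) ∧ T' = (fun _ => a)) := by
  simp only [SierpinskiGraph, Fin.exists_fin_succ, Fin.forall_fin_succ, funext_iff, forall_and,
    Fin.cons_zero, Fin.cons_succ]
  grind

theorem adj_cons_const {a b : V} (h : G.Adj a b) :
    (SierpinskiGraph G (n + 1)).Adj (Fin.cons a fun _ => b) (Fin.cons b fun _ => a) :=
  adj_cons_iff.2 (.inr ⟨h, rfl, rfl⟩)

theorem cons_const (a : V) : (Fin.cons a fun _ => a : Fin (n + 1) → V) = fun _ => a :=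
  Fin.cons_self_tail fun _ => a

variable (G) in
def consHom (a : V) (n : ℕ) : SierpinskiGraph G n →g SierpinskiGraph G (n + 1) where
  toFun T := Fin.cons a T
  map_rel' h := adj_cons_iff.2 (.inl ⟨rfl, h⟩)

theorem reachable (hc : G.Connected) :
    ∀ n (u v : Fin n → V), (SierpinskiGraph G n).Reachable u v
  | 0, u, v => by rw [Subsingleton.elim u v]
  | n + 1, u, v => by
    induction u using Fin.consCases with | cons a T =>
    induction v using Fin.consCases with | cons b T' =>
    obtain ⟨p⟩ := hc.preconnected a b
    induction p generalizing T with
    | nil => exact (reachable hc n T T').map (consHom G _ n)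
    | cons h p ih =>
      exact ((reachable hc n T _).map (consHom G _ n)).trans
        ((adj_cons_const h).reachable.trans (ih _))

theorem connected (hc : G.Connected) (n : ℕ) : (SierpinskiGraph G n).Connected :=
  have := hc.nonempty
  ⟨reachable hc n⟩

theorem dist_cons_cons_le (hc : G.Connected) (a : V) (T T' : Fin n → V) :
    dS[n + 1] (Fin.cons a T) (Fin.cons a T') ≤ dS[n] T T' := by
  obtain ⟨p, hp⟩ := (reachable hc n T T').exists_walk_length_eq_dist
  calc _ ≤ (p.map (consHom G a n)).length := dist_le _
    _ = _ := by rw [Walk.length_map, hp]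

theorem dist_const_const_le_of_adj (hc : G.Connected) {a b : V} (h : G.Adj a b) :
    ∀ n, dS[n] (fun _ => a) (fun _ => b) ≤ 2 ^ n - 1
  | 0 => by simp [Subsingleton.elim (fun _ => a : Fin 0 → V) fun _ => b]
  | n + 1 => by
    have ih := dist_const_const_le_of_adj hc h n
    have hS := connected hc (n + 1)
    have hpow : 2 ^ (n + 1) - 1 = (2 ^ n - 1) + (1 + (2 ^ n - 1)) := by
      have := Nat.one_le_two_pow (n := n)
      rw [pow_succ]
      omega
    rw [← cons_const (n := n) a, ← cons_const (n := n) b, hpow]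
    calc _ ≤ dS[n + 1] (Fin.cons a fun _ => a) (Fin.cons a fun _ => b) +
          dS[n + 1] (Fin.cons a fun _ => b) (Fin.cons b fun _ => b) := hS.dist_triangle
      _ ≤ dS[n + 1] (Fin.cons a fun _ => a) (Fin.cons a fun _ => b) +
          (dS[n + 1] (Fin.cons a fun _ => b) (Fin.cons b fun _ => a) +
            dS[n + 1] (Fin.cons b fun _ => a) (Fin.cons b fun _ => b)) := by
          gcongr
          exact hS.dist_triangle
      _ ≤ _ := by
          gcongr
          · exact (dist_cons_cons_le hc a _ _).trans ih
          · exact (dist_eq_one_iff_adj.2 (adj_cons_const h)).le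
          · exact (dist_cons_cons_le hc b _ _).trans ih

theorem dist_const_const_le (hc : G.Connected) {a b : V} (p : G.Walk a b) :
    dS[n] (fun _ => a) (fun _ => b) ≤ (2 ^ n - 1) * p.length := by
  induction p with
  | nil => simp
  | cons h p ih =>
    calc _ ≤ _ := (connected hc n).dist_triangle
      _ ≤ (2 ^ n - 1) + (2 ^ n - 1) * p.length :=
          add_le_add (dist_const_const_le_of_adj hc h n) ih
      _ = _ := by rw [Walk.length_cons]; ring

variable (G) in
noncomputable def weightedDist (a : V) : (n : ℕ) → (Fin n → V) → ℕ
  | 0, _ => 0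
  | n + 1, u => 2 ^ n * G.dist a (u 0) + weightedDist a n (Fin.tail u)

@[simp]
theorem weightedDist_cons (a b : V) (T : Fin n → V) :
    weightedDist G a (n + 1) (Fin.cons b T) = 2 ^ n * G.dist a b + weightedDist G a n T := by
  simp [weightedDist]

theorem weightedDist_const (a b : V) :
    ∀ n, weightedDist G a n (fun _ => b) = (2 ^ n - 1) * G.dist a b
  | 0 => by simp [weightedDist]
  | n + 1 => by
    rw [← cons_const, weightedDist_cons, weightedDist_const a b n]
    zify [Nat.one_le_two_pow (n := n), Nat.one_le_two_pow (n := n + 1)]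
    ring

theorem weightedDist_le_of_adj (hc : G.Connected) (a : V) :
    ∀ {n} {u v : Fin n → V}, (SierpinskiGraph G n).Adj u v →
      weightedDist G a n u ≤ weightedDist G a n v + 1
  | 0, _, _, ⟨i, _⟩ => i.elim0
  | n + 1, u, v, huv => by
    induction u using Fin.consCases with | cons b T =>
    induction v using Fin.consCases with | cons c T' =>
    rcases adj_cons_iff.1 huv with ⟨rfl, h⟩ | ⟨h, rfl, rfl⟩
    · simpa [add_assoc] using weightedDist_le_of_adj hc a h
    · have hbc : G.dist a b ≤ G.dist a c + 1 := by
        have := hc.dist_triangle (u := a) (v := c) (w := b)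
        rwa [dist_comm (u := c), dist_eq_one_iff_adj.2 h] at this
      obtain ⟨N, hN⟩ : ∃ N, 2 ^ n = N + 1 :=
        ⟨2 ^ n - 1, (Nat.sub_add_cancel Nat.one_le_two_pow).symm⟩
      simp only [weightedDist_cons, weightedDist_const, hN, Nat.add_sub_cancel]
      nlinarith

theorem weightedDist_le_add_dist (hc : G.Connected) (a : V) (u v : Fin n → V) :
    weightedDist G a n u ≤ weightedDist G a n v + dS[n] u v :=
  le_add_dist_of_forall_adj (fun _ _ => weightedDist_le_of_adj hc a) (reachable hc n u v)

theorem dist_const_const (hc : G.Connected) (a b : V) :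
    dS[n] (fun _ => a) (fun _ => b) = (2 ^ n - 1) * G.dist a b := by
  apply le_antisymm
  · obtain ⟨p, hp⟩ := hc.exists_walk_length_eq_dist a b
    exact hp ▸ dist_const_const_le hc p
  · simpa [weightedDist_const, dist_comm (u := b)] using
      weightedDist_le_add_dist hc b (fun _ => a : Fin n → V) (fun _ => b)

theorem two_pow_mul_dist_le_dist_cons_const (hc : G.Connected) (a b c : V) :
    2 ^ n * G.dist a b ≤ dS[n + 1] (Fin.cons a fun _ => c) (Fin.cons b fun _ => c) := by
  have := weightedDist_le_add_dist hc b (Fin.cons a fun _ => c : Fin (n + 1) → V)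
    (Fin.cons b fun _ => c)
  simp only [weightedDist_cons, dist_self, mul_zero, zero_add, dist_comm (u := b)] at this
  omega

theorem dist_const_const_le_two_mul (hc : G.Connected) {a b c : V} (hab : G.Adj a b)
    (hbc : G.Adj b c) : dS[m] (fun _ => a) (fun _ => c) ≤ 2 * (2 ^ m - 1) := by
  have := hc.dist_triangle (u := a) (v := b) (w := c)
  rw [dist_eq_one_iff_adj.2 hab, dist_eq_one_iff_adj.2 hbc] at this
  rw [dist_const_const hc, mul_comm]
  exact Nat.mul_le_mul_right _ this

theorem two_mul_le_dist_const_const (hc : G.Connected) {a c : V} (h : 2 ≤ G.dist a c) :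
    2 * (2 ^ m - 1) ≤ dS[m] (fun _ => a) (fun _ => c) := by
  rw [dist_const_const hc, mul_comm]
  exact Nat.mul_le_mul_left _ h

open Classical in
variable (G) in
noncomputable def reentryDist (z : V) (W : Fin n → V) (u : Fin (n + 1) → V) : ℕ :=
  if u 0 = z then dS[n] (Fin.tail u) W
  else ⨅ b, dS[n + 1] u (Fin.cons b fun _ => z) + 1 + dS[n] (fun _ => b) W

theorem reentryDist_cons_self (z : V) (T W : Fin n → V) :
    reentryDist G z W (Fin.cons z T) = dS[n] T W := by
  simp [reentryDist]

theorem reentryDist_le {z a : V} (ha : a ≠ z) (T W : Fin n → V) (b : V) :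
    reentryDist G z W (Fin.cons a T) ≤
      dS[n + 1] (Fin.cons a T) (Fin.cons b fun _ => z) + 1 + dS[n] (fun _ => b) W := by
  simpa [reentryDist, ha] using ciInf_le (OrderBot.bddBelow _) b

theorem exists_reentryDist_eq [Nonempty V] {z a : V} (ha : a ≠ z) (T W : Fin n → V) :
    ∃ b, reentryDist G z W (Fin.cons a T) =
      dS[n + 1] (Fin.cons a T) (Fin.cons b fun _ => z) + 1 + dS[n] (fun _ => b) W := by
  obtain ⟨b, hb⟩ := Nat.sInf_mem (Set.range_nonempty fun b =>
    dS[n + 1] (Fin.cons a T) (Fin.cons b fun _ => z) + 1 + dS[n] (fun _ => b) W)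
  refine ⟨b, ?_⟩
  simp only [reentryDist, Fin.cons_zero, ha, if_false]
  exact hb.symm

theorem reentryDist_le_of_adj (hc : G.Connected) (z : V) (W : Fin n → V)
    {u v : Fin (n + 1) → V} (huv : (SierpinskiGraph G (n + 1)).Adj u v) :
    reentryDist G z W u ≤ reentryDist G z W v + 1 := by
  have := hc.nonempty
  induction u using Fin.consCases with | cons a T =>
  induction v using Fin.consCases with | cons b T' =>
  by_cases ha : a = z <;> by_cases hb : b = z
  · subst ha hb
    obtain ⟨-, h⟩ | ⟨h, -, -⟩ := adj_cons_iff.1 huv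
    · have := (connected hc n).dist_triangle (u := T) (v := T') (w := W)
      rw [dist_eq_one_iff_adj.2 h] at this
      simp only [reentryDist_cons_self]
      omega
    · exact absurd h (G.loopless.irrefl _)
  · subst ha
    obtain ⟨hab, -⟩ | ⟨-, rfl, rfl⟩ := adj_cons_iff.1 huv
    · exact absurd hab.symm hb
    obtain ⟨c, hc'⟩ := exists_reentryDist_eq (G := G) hb (fun _ => a) W
    have h₁ := (connected hc n).dist_triangle (u := fun _ => b) (v := fun _ => c) (w := W)
    have h₂ := two_pow_mul_dist_le_dist_cons_const (n := n) hc b c a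
    have h₃ : (2 ^ n - 1) * G.dist b c ≤ 2 ^ n * G.dist b c :=
      Nat.mul_le_mul_right _ (Nat.sub_le _ _)
    rw [dist_const_const hc] at h₁
    rw [reentryDist_cons_self, hc']
    omega
  · subst hb
    obtain ⟨hab, -⟩ | ⟨-, rfl, rfl⟩ := adj_cons_iff.1 huv
    · exact absurd hab ha
    have := reentryDist_le (G := G) ha (fun _ => b) W a
    rw [SimpleGraph.dist_self] at this
    rw [reentryDist_cons_self]
    omega
  · obtain ⟨c, hc'⟩ := exists_reentryDist_eq (G := G) hb T' W
    have := (connected hc (n + 1)).dist_triangle (u := Fin.cons a T) (v := Fin.cons b T')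
      (w := Fin.cons c fun _ => z)
    rw [dist_eq_one_iff_adj.2 huv] at this
    have := reentryDist_le (G := G) ha T W c
    omega

theorem dist_cons_cons (hc : G.Connected) (z : V) (T T' : Fin n → V) :
    dS[n + 1] (Fin.cons z T) (Fin.cons z T') = dS[n] T T' := by
  refine le_antisymm (dist_cons_cons_le hc z T T') ?_
  have := le_add_dist_of_forall_adj (fun _ _ => reentryDist_le_of_adj hc z T')
    (reachable hc (n + 1) (Fin.cons z T) (Fin.cons z T'))
  rwa [reentryDist_cons_self, reentryDist_cons_self, dist_self, zero_add] at this

theorem dist_eq_dist_of_common_prefix (hc : G.Connected) :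
    ∀ {k : ℕ} (w w' : Fin (n + k) → V),
      (∀ i : Fin (n + k), (i : ℕ) < k → w i = w' i) →
      dS[n + k] w w' = dS[n] (fun i => w ⟨k + i, by omega⟩) (fun i => w' ⟨k + i, by omega⟩)
  | 0, w, w', _ => by simp only [Nat.zero_add, Fin.eta]; rfl
  | k + 1, w, w', h => by
    have hw : w 0 = w' 0 := h 0 (Nat.succ_pos k)
    calc dS[n + k + 1] w w'
        = dS[n + k + 1] (Fin.cons (w 0) (Fin.tail w)) (Fin.cons (w 0) (Fin.tail w')) := by
          rw [Fin.cons_self_tail, hw, Fin.cons_self_tail]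
      _ = dS[n + k] (Fin.tail w) (Fin.tail w') := dist_cons_cons hc _ _ _
      _ = _ := dist_eq_dist_of_common_prefix hc _ _ fun i hi => h i.succ (by simpa using hi)
      _ = _ := by
          congr 1 <;> funext i <;> simp only [Fin.tail] <;> congr 1 <;> ext <;>
            simp only [Fin.val_succ] <;> omega

theorem dist_comp_cast {n n' : ℕ} (h : n = n') (u v : Fin n → V) :
    dS[n] u v = dS[n'] (u ∘ Fin.cast h.symm) (v ∘ Fin.cast h.symm) := by
  subst h
  rfl

variable (G) in
noncomputable def minGeodesicCost (x y : V) (X Y : Fin m → V) : ℕ :=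
  sInf {d | ∃ q : G.Walk x y, q.IsPath ∧ q.length = G.dist x y ∧
    d = dS[m] (fun _ => q.snd) X + dS[m] (fun _ => q.penultimate) Y}

theorem minGeodesicCost_le {x y : V} (X Y : Fin m → V) (q : G.Walk x y)
    (hq : q.length = G.dist x y) :
    minGeodesicCost G x y X Y ≤ dS[m] (fun _ => q.snd) X + dS[m] (fun _ => q.penultimate) Y :=
  Nat.sInf_le ⟨q, q.isPath_of_length_eq_dist hq, hq, rfl⟩

theorem exists_minGeodesicCost_eq (hc : G.Connected) (x y : V) (X Y : Fin m → V) :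
    ∃ q : G.Walk x y, q.length = G.dist x y ∧
      minGeodesicCost G x y X Y =
        dS[m] (fun _ => q.snd) X + dS[m] (fun _ => q.penultimate) Y := by
  obtain ⟨q, hq⟩ := hc.exists_walk_length_eq_dist x y
  obtain ⟨q, -, hq, h⟩ : minGeodesicCost G x y X Y ∈ _ :=
    Nat.sInf_mem ⟨_, q, q.isPath_of_length_eq_dist hq, hq, rfl⟩
  exact ⟨q, hq, h⟩

theorem minGeodesicCost_le_of_adj (hc : G.Connected) (x y : V) {X X' : Fin m → V}
    (Y : Fin m → V) (h : (SierpinskiGraph G m).Adj X X') :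
    minGeodesicCost G x y X Y ≤ minGeodesicCost G x y X' Y + 1 := by
  obtain ⟨q, hq, hcost⟩ := exists_minGeodesicCost_eq hc x y X' Y
  have := (connected hc m).dist_triangle (u := fun _ => q.snd) (v := X') (w := X)
  rw [dist_eq_one_iff_adj.2 h.symm] at this
  have := minGeodesicCost_le X Y q hq
  omega

theorem minGeodesicCost_of_adj {x y : V} (h : G.Adj x y) (X Y : Fin m → V) :
    minGeodesicCost G x y X Y = dS[m] (fun _ => y) X + dS[m] (fun _ => x) Y := by
  have hd : G.dist x y = 1 := dist_eq_one_iff_adj.2 h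
  refine le_antisymm (minGeodesicCost_le X Y (.cons h .nil) (by simp [hd])) (le_csInf ?_ ?_)
  · exact ⟨_, .cons h .nil, by simp [h.ne], by simp [hd], rfl⟩
  · rintro _ ⟨q, -, hq, rfl⟩
    rw [hd] at hq
    rw [Walk.snd, Walk.penultimate, hq, Walk.getVert_zero, ← hq, Walk.getVert_length]

theorem minGeodesicCost_step_closer (hc : G.Connected) {y c a : V} (hca : G.Adj c a)
    (hay : a ≠ y) (hd : G.dist c y = G.dist a y + 1) (Y : Fin m → V) :
    minGeodesicCost G c y (fun _ => a) Y + 2 * (2 ^ m - 1) ≤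
      minGeodesicCost G a y (fun _ => c) Y := by
  obtain ⟨q, hq, hcost⟩ := exists_minGeodesicCost_eq hc a y (fun _ => c) Y
  cases q with
  | nil => exact absurd rfl hay
  | @cons _ s _ has r =>
    rw [Walk.length_cons] at hq
    have hsc : 2 ≤ G.dist s c := by
      have := hc.dist_triangle (u := c) (v := s) (w := y)
      have := dist_le r
      rw [dist_comm (u := s)]
      omega
    have hle := minGeodesicCost_le (fun _ => a) Y (.cons hca (.cons has r))
      (by rw [Walk.length_cons, Walk.length_cons]; omega)
    simp only [Walk.snd_cons, Walk.penultimate_cons_cons, SimpleGraph.dist_self, zero_add]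
      at hle hcost
    have := two_mul_le_dist_const_const (m := m) hc hsc
    omega

theorem minGeodesicCost_step_farther (hc : G.Connected) (hb : G.Colorable 2) {y c a : V}
    (hca : G.Adj c a) (hcy : c ≠ y) (hd : G.dist a y = G.dist c y + 1) (Y : Fin m → V) :
    minGeodesicCost G c y (fun _ => a) Y ≤
      minGeodesicCost G a y (fun _ => c) Y + 2 * (2 ^ m - 1) := by
  obtain ⟨q, hq, hcost⟩ := exists_minGeodesicCost_eq hc a y (fun _ => c) Y
  cases q with
  | nil => simp at hd
  | @cons _ s _ has r =>
    have hr : r.length = G.dist c y := by rw [Walk.length_cons] at hq; omega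
    have hrnil : ¬ r.Nil := by
      rw [← Walk.length_eq_zero_iff, hr]
      exact (hc.pos_dist_of_ne hcy).ne'
    rw [hcost, Walk.snd_cons, Walk.penultimate_cons_of_not_nil _ _ hrnil]
    by_cases hsc : s = c
    · subst hsc
      have hle := minGeodesicCost_le (fun _ => a) Y r hr
      have hsnd := dist_const_const_le_two_mul (m := m) hc (r.adj_snd hrnil).symm hca
      rw [SimpleGraph.dist_self]
      omega
    -- `s` and `c` are both neighbours of `a` at distance `d(c, y)` from `y`, so by
    -- bipartiteness they are not adjacent.
    have hsc' : 2 ≤ G.dist s c := by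
      have hsy : G.dist y s = G.dist y c := by
        rw [SimpleGraph.dist_comm, SimpleGraph.dist_comm (u := y), ← hr,
          length_eq_dist_of_subwalk hq (r.isSubwalk_cons has)]
      have h0 : G.dist s c ≠ 0 := by simpa [hc.dist_eq_zero_iff] using hsc
      have h1 : G.dist s c ≠ 1 := fun h =>
        dist_ne_dist_of_adj hb (dist_eq_one_iff_adj.1 h) (hc y s) hsy
      omega
    obtain ⟨r', hr'⟩ := hc.exists_walk_length_eq_dist c y
    have hr'nil : ¬ r'.Nil := by
      rw [← Walk.length_eq_zero_iff, hr']
      exact (hc.pos_dist_of_ne hcy).ne'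
    have hle := minGeodesicCost_le (fun _ => a) Y r' hr'
    have hsnd := dist_const_const_le_two_mul (m := m) hc (r'.adj_snd hr'nil).symm hca
    have hpen := dist_const_const_le_two_mul (m := m) hc (r'.adj_penultimate hr'nil)
      (r.adj_penultimate hrnil).symm
    have htri := (connected hc m).dist_triangle (u := fun _ => r'.penultimate)
      (v := fun _ => r.penultimate) (w := Y)
    have := two_mul_le_dist_const_const (m := m) hc hsc'
    omega

open Classical in
variable (G) in
/-- The claimed value of `d(u, y·Y) + 2 * (2 ^ m - 1)`; the shift avoids truncated
subtraction. -/
noncomputable def distFormula (y : V) (Y : Fin m → V) (u : Fin (m + 1) → V) : ℕ :=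
  if u 0 = y then dS[m] (Fin.tail u) Y + 2 * (2 ^ m - 1)
  else minGeodesicCost G (u 0) y (Fin.tail u) Y + (2 ^ (m + 1) - 1) * G.dist (u 0) y

theorem distFormula_cons_self (y : V) (T Y : Fin m → V) :
    distFormula G y Y (Fin.cons y T) = dS[m] T Y + 2 * (2 ^ m - 1) := by
  simp [distFormula]

theorem distFormula_cons_of_ne {y a : V} (ha : a ≠ y) (T Y : Fin m → V) :
    distFormula G y Y (Fin.cons a T) =
      minGeodesicCost G a y T Y + (2 ^ (m + 1) - 1) * G.dist a y := by
  simp [distFormula, ha]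

theorem distFormula_cons_const_le (hc : G.Connected) (hb : G.Colorable 2) {y a b : V}
    (h : G.Adj a b) (ha : a ≠ y) (hb' : b ≠ y) (Y : Fin m → V) :
    distFormula G y Y (Fin.cons a fun _ => b) ≤
      distFormula G y Y (Fin.cons b fun _ => a) + 1 := by
  have := Nat.one_le_two_pow (n := m)
  have hpow : 2 ^ (m + 1) = 2 * 2 ^ m := by ring
  rw [distFormula_cons_of_ne ha, distFormula_cons_of_ne hb']
  have hne := dist_ne_dist_of_adj hb h (hc y a)
  rcases h.diff_dist_adj (u := y) with hd | hd | hd <;>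
    rw [SimpleGraph.dist_comm (u := y), SimpleGraph.dist_comm (u := y)] at hd hne
  · exact absurd hd.symm hne
  · have := minGeodesicCost_step_farther hc hb h ha hd Y
    rw [hd, mul_add_one]
    omega
  · have hd' : G.dist a y = G.dist b y + 1 := by omega
    have := minGeodesicCost_step_closer hc h hb' hd' Y
    rw [hd', mul_add_one]
    omega

theorem distFormula_le_of_adj (hc : G.Connected) (hb : G.Colorable 2) (y : V) (Y : Fin m → V)
    {u v : Fin (m + 1) → V} (huv : (SierpinskiGraph G (m + 1)).Adj u v) :
    distFormula G y Y u ≤ distFormula G y Y v + 1 := by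
  have := Nat.one_le_two_pow (n := m)
  have hpow : 2 ^ (m + 1) = 2 * 2 ^ m := by ring
  induction u using Fin.consCases with | cons a T =>
  induction v using Fin.consCases with | cons b T' =>
  rcases adj_cons_iff.1 huv with ⟨rfl, h⟩ | ⟨h, rfl, rfl⟩
  · by_cases ha : a = y
    · subst ha
      have := (connected hc m).dist_triangle (u := T) (v := T') (w := Y)
      rw [dist_eq_one_iff_adj.2 h] at this
      rw [distFormula_cons_self, distFormula_cons_self]
      omega
    · have := minGeodesicCost_le_of_adj hc a y Y h
      rw [distFormula_cons_of_ne ha, distFormula_cons_of_ne ha]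
      omega
  by_cases ha : a = y
  · subst ha
    rw [distFormula_cons_self, distFormula_cons_of_ne h.ne.symm, minGeodesicCost_of_adj h.symm,
      dist_eq_one_iff_adj.2 h.symm, SimpleGraph.dist_self]
    omega
  by_cases hb' : b = y
  · subst hb'
    rw [distFormula_cons_of_ne h.ne, distFormula_cons_self, minGeodesicCost_of_adj h,
      dist_eq_one_iff_adj.2 h, SimpleGraph.dist_self]
    omega
  exact distFormula_cons_const_le hc hb h ha hb' Y

theorem dist_cons_snd_cons_penultimate_add_le (hc : G.Connected) {a b : V} (p : G.Walk a b)
    (hp : ¬ p.Nil) :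
    dS[m + 1] (Fin.cons a fun _ => p.snd) (Fin.cons b fun _ => p.penultimate) +
      2 * (2 ^ m - 1) ≤ (2 ^ (m + 1) - 1) * p.length := by
  have := Nat.one_le_two_pow (n := m)
  have hpow : 2 ^ (m + 1) = 2 * 2 ^ m := by ring
  induction p with
  | nil => simp at hp
  | @cons a s b h p ih =>
    by_cases hp' : p.Nil
    · cases hp'
      rw [Walk.snd_cons, Walk.penultimate_cons_nil, dist_eq_one_iff_adj.2 (adj_cons_const h),
        Walk.length_cons, Walk.length_nil]
      omega
    have hS := connected hc (m + 1)
    have h₁ := hS.dist_triangle (u := Fin.cons a fun _ => s) (v := Fin.cons s fun _ => a)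
      (w := Fin.cons b fun _ => p.penultimate)
    have h₂ := hS.dist_triangle (u := Fin.cons s fun _ => a) (v := Fin.cons s fun _ => p.snd)
      (w := Fin.cons b fun _ => p.penultimate)
    have h₃ := dist_const_const_le_two_mul (m := m) hc h (p.adj_snd hp')
    rw [dist_eq_one_iff_adj.2 (adj_cons_const h)] at h₁
    rw [dist_cons_cons hc] at h₂
    rw [Walk.snd_cons, Walk.penultimate_cons_of_not_nil _ _ hp', Walk.length_cons, mul_add_one]
    have := ih hp'
    omega

theorem dist_cons_cons_add_le (hc : G.Connected) {x y : V} (hxy : x ≠ y) (X Y : Fin m → V) :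
    dS[m + 1] (Fin.cons x X) (Fin.cons y Y) + 2 * (2 ^ m - 1) ≤
      minGeodesicCost G x y X Y + (2 ^ (m + 1) - 1) * G.dist x y := by
  obtain ⟨q, hq, hcost⟩ := exists_minGeodesicCost_eq hc x y X Y
  have hqnil : ¬ q.Nil := by
    rw [← Walk.length_eq_zero_iff, hq]
    exact (hc.pos_dist_of_ne hxy).ne'
  have hS := connected hc (m + 1)
  have h₁ := hS.dist_triangle (u := Fin.cons x X) (v := Fin.cons x fun _ => q.snd)
    (w := Fin.cons y Y)
  have h₂ := hS.dist_triangle (u := Fin.cons x fun _ => q.snd)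
    (v := Fin.cons y fun _ => q.penultimate) (w := Fin.cons y Y)
  have h₃ := dist_cons_snd_cons_penultimate_add_le (m := m) hc q hqnil
  rw [dist_cons_cons hc, SimpleGraph.dist_comm (u := X)] at h₁
  rw [dist_cons_cons hc] at h₂
  rw [hcost, ← hq]
  omega

theorem minGeodesicCost_add_le (hc : G.Connected) (hb : G.Colorable 2) {x y : V} (hxy : x ≠ y)
    (X Y : Fin m → V) :
    minGeodesicCost G x y X Y + (2 ^ (m + 1) - 1) * G.dist x y ≤
      dS[m + 1] (Fin.cons x X) (Fin.cons y Y) + 2 * (2 ^ m - 1) := by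
  have := le_add_dist_of_forall_adj (fun _ _ => distFormula_le_of_adj hc hb y Y)
    (reachable hc (m + 1) (Fin.cons x X) (Fin.cons y Y))
  rw [distFormula_cons_of_ne hxy, distFormula_cons_self, SimpleGraph.dist_self, zero_add] at this
  omega

theorem dist_cons_cons_of_ne (hc : G.Connected) (hb : G.Colorable 2) {x y : V} (hxy : x ≠ y)
    (X Y : Fin m → V) :
    dS[m + 1] (Fin.cons x X) (Fin.cons y Y) =
      minGeodesicCost G x y X Y + (2 ^ (m + 1) - 1) * G.dist x y - 2 * (2 ^ m - 1) := by
  have := dist_cons_cons_add_le hc hxy X Y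
  have := minGeodesicCost_add_le hc hb hxy X Y
  omega

end SierpinskiGraph

/-- for a connected bipartite graph `G`, with `t = j + m` (`j, m ≥ 1`),
`w = z^{j-1} x x_{j+1} ⋯ x_t`, `w' = z^{j-1} y y_{j+1} ⋯ y_t`, `x ≠ y`:
`d_{S(G,t)}(w,w') = λ(x,y) + (2^{m+1} − 1)·d_G(x,y) − 2(2^m − 1)` where
`λ(x,y) = min_{P_i ∈ 𝒫(x,y)} { d_{S(G,m)}((x^{(i)})^m, x_{j+1}⋯x_t)
  + d_{S(G,m)}((y^{(i)})^m, y_{j+1}⋯y_t) }`. -/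
theorem stmt_9 {V : Type*} (G : SimpleGraph V) (hconn : G.Connected)
    (hbip : G.Colorable 2)
    (j m : ℕ) (hj : 1 ≤ j)
    (x y z : V) (hxy : x ≠ y)
    (w w' : Fin (j + m) → V)
    (hpre : ∀ i : Fin (j + m), (i : ℕ) < j - 1 → w i = z ∧ w' i = z)
    (hwx : w ⟨j - 1, by omega⟩ = x) (hwy : w' ⟨j - 1, by omega⟩ = y) :
    (SierpinskiGraph G (j + m)).dist w w' =
      sInf { d : ℕ | ∃ q : G.Walk x y, q.IsPath ∧ q.length = G.dist x y ∧
          d = (SierpinskiGraph G m).dist (fun _ => q.getVert 1)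
                (fun i : Fin m => w (Fin.natAdd j i))
            + (SierpinskiGraph G m).dist (fun _ => q.getVert (q.length - 1))
                (fun i : Fin m => w' (Fin.natAdd j i)) }
        + (2 ^ (m + 1) - 1) * G.dist x y - 2 * (2 ^ m - 1) := by
  have hlen : j + m = m + 1 + (j - 1) := by omega
  have hsplit (v : Fin (j + m) → V) :
      (fun i : Fin (m + 1) => (v ∘ Fin.cast hlen.symm) ⟨j - 1 + i, by omega⟩) =
        Fin.cons (v ⟨j - 1, by omega⟩) fun i => v (Fin.natAdd j i) := by
    funext i
    cases i using Fin.cases with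
    | zero => rfl
    | succ i =>
      simp only [Function.comp_apply, Fin.cons_succ]
      congr 1
      ext
      simp only [Fin.val_succ, Fin.val_cast, Fin.val_natAdd]
      omega
  rw [SierpinskiGraph.dist_comp_cast hlen,
    SierpinskiGraph.dist_eq_dist_of_common_prefix hconn (w ∘ Fin.cast hlen.symm)
      (w' ∘ Fin.cast hlen.symm) fun i hi => (hpre _ hi).1.trans (hpre _ hi).2.symm,
    hsplit, hsplit, hwx, hwy]
  exact SierpinskiGraph.dist_cons_cons_of_ne hconn hbip hxy _ _
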